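/- There exists a constant K₉ > 0 such that the following holds. For all A_c ≥ 1 and d with √A_c ≤ d ≤ A_c, all x_a, x_b ∈ [0,1] and y_a ∈ [0,1], and all (w, z) ∈ [0,1]², if y_b = y_a then the partial derivative of g_{a,b} with respect to z satisfies | ∂g_{a,b}/∂z (w, z) | ≥ K₉ · (A_c^{3/2}/d²) · |x_b − x_a| · |z − y_a|. -/

import Mathlib

open Real Set

/-!
With `y_a = y_b = y` and `c_i = d + √A_c (x_i + w)`, both square roots have the form
`r_i = √(c_i² + A_c (y - z)²)`, so `∂g/∂z = A_c (z - y) (1/r_a - 1/r_b)` and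
`1/r_a - 1/r_b = (c_b² - c_a²) / (r_a r_b (r_a + r_b))` with `c_b - c_a = √A_c (x_b - x_a)`.
Since `√A_c ≤ d`, every `c_i` lies in `[d, 3d]` and every `r_i` is at most `4d`, which gives the
bound with `K₉ = 1/64`.
-/

/-- The phase difference `‖x_a − w‖ − ‖x_b − w‖` in the normalized coordinates of the paper:
the transmit points are `(−√A_c·x, √A_c·y)` and the receive point is `(d + √A_c·w, √A_c·z)`. -/
noncomputable def gab (Ac d xa xb ya yb w z : ℝ) : ℝ :=
  Real.sqrt ((d + Real.sqrt Ac * (xa + w)) ^ 2 + Ac * (ya - z) ^ 2) -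
    Real.sqrt ((d + Real.sqrt Ac * (xb + w)) ^ 2 + Ac * (yb - z) ^ 2)

theorem rpow_three_halves {x : ℝ} (hx : 0 ≤ x) : x ^ ((3 : ℝ) / 2) = x * √x := by
  rw [show (3 : ℝ) / 2 = 1 + 1 / 2 by norm_num, rpow_add' hx (by norm_num), rpow_one,
    ← sqrt_eq_rpow]

theorem hasDerivAt_sqrt_sq_add_mul_sq {A c y z : ℝ} (h : 0 < c ^ 2 + A * (y - z) ^ 2) :
    HasDerivAt (fun t => √(c ^ 2 + A * (y - t) ^ 2))
      (A * (z - y) / √(c ^ 2 + A * (y - z) ^ 2)) z := by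
  have hinner := ((((hasDerivAt_id z).const_sub y).pow 2).const_mul A).const_add (c ^ 2)
  refine (hinner.sqrt h.ne').congr_deriv ?_
  have := sqrt_pos.mpr h
  simp only [id, Pi.pow_apply, Nat.cast_ofNat]
  field_simp
  ring

theorem deriv_gab_of_eq {Ac d xa xb y w z : ℝ} (hAc : 0 ≤ Ac)
    (ha : d + √Ac * (xa + w) ≠ 0) (hb : d + √Ac * (xb + w) ≠ 0) :
    deriv (fun t => gab Ac d xa xb y y w t) z =
      Ac * (z - y) * (1 / √((d + √Ac * (xa + w)) ^ 2 + Ac * (y - z) ^ 2) -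
        1 / √((d + √Ac * (xb + w)) ^ 2 + Ac * (y - z) ^ 2)) := by
  have hpos : ∀ c : ℝ, c ≠ 0 → 0 < c ^ 2 + Ac * (y - z) ^ 2 := fun c hc => by positivity
  exact ((hasDerivAt_sqrt_sq_add_mul_sq (hpos _ ha)).sub
    (hasDerivAt_sqrt_sq_add_mul_sq (hpos _ hb))).deriv.trans (by ring)

theorem one_div_sqrt_sub_one_div_sqrt {c₁ c₂ u : ℝ} (h₁ : 0 < c₁ ^ 2 + u) (h₂ : 0 < c₂ ^ 2 + u) :
    1 / √(c₁ ^ 2 + u) - 1 / √(c₂ ^ 2 + u) =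
      (c₂ ^ 2 - c₁ ^ 2) /
        (√(c₁ ^ 2 + u) * √(c₂ ^ 2 + u) * (√(c₁ ^ 2 + u) + √(c₂ ^ 2 + u))) := by
  have hr₁ := sqrt_pos.mpr h₁
  have hr₂ := sqrt_pos.mpr h₂
  rw [div_sub_div _ _ hr₁.ne' hr₂.ne', eq_div_iff (by positivity)]
  field_simp
  linear_combination sq_sqrt h₂.le - sq_sqrt h₁.le

theorem sqrt_sq_add_le {c u d : ℝ} (hd : 0 < d) (hc : c ∈ Icc d (3 * d)) (hu : u ≤ d ^ 2) :
    √(c ^ 2 + u) ≤ 4 * d := by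
  rw [sqrt_le_left (by positivity)]
  nlinarith [hc.1, hc.2]

theorem div_le_abs_one_div_sqrt_sub {c₁ c₂ u d : ℝ} (hd : 0 < d)
    (hc₁ : c₁ ∈ Icc d (3 * d)) (hc₂ : c₂ ∈ Icc d (3 * d)) (hu₀ : 0 ≤ u) (hu : u ≤ d ^ 2) :
    |c₂ - c₁| / (64 * d ^ 2) ≤ |1 / √(c₁ ^ 2 + u) - 1 / √(c₂ ^ 2 + u)| := by
  have h₁ : 0 < c₁ ^ 2 + u := by nlinarith [hc₁.1]
  have h₂ : 0 < c₂ ^ 2 + u := by nlinarith [hc₂.1]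
  have hr₁ := sqrt_pos.mpr h₁
  have hr₂ := sqrt_pos.mpr h₂
  have hr₁' := sqrt_sq_add_le hd hc₁ hu
  have hr₂' := sqrt_sq_add_le hd hc₂ hu
  have hsum : 2 * d ≤ c₂ + c₁ := by linarith [hc₁.1, hc₂.1]
  rw [one_div_sqrt_sub_one_div_sqrt h₁ h₂, sq_sub_sq, abs_div, abs_mul,
    abs_of_pos (by positivity : (0 : ℝ) < _ * _ * _), abs_of_pos (by linarith : 0 < c₂ + c₁)]
  calc |c₂ - c₁| / (64 * d ^ 2)
      = 2 * d * |c₂ - c₁| / (4 * d * (4 * d) * (4 * d + 4 * d)) := by field_simp; ring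
    _ ≤ _ := by gcongr; exact mul_nonneg (by linarith) (abs_nonneg _)

theorem mem_Icc_add_sqrt_mul {Ac d x w : ℝ} (hd : √Ac ≤ d) (hx : x ∈ Icc (0 : ℝ) 1)
    (hw : w ∈ Icc (0 : ℝ) 1) : d + √Ac * (x + w) ∈ Icc d (3 * d) := by
  have hs := sqrt_nonneg Ac
  constructor <;> nlinarith [hx.1, hx.2, hw.1, hw.2]

theorem stmt_16 :
    ∃ K₉ : ℝ, 0 < K₉ ∧
      ∀ Ac d : ℝ, 1 ≤ Ac → Real.sqrt Ac ≤ d → d ≤ Ac →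
      ∀ xa ∈ Set.Icc (0:ℝ) 1, ∀ xb ∈ Set.Icc (0:ℝ) 1, ∀ ya ∈ Set.Icc (0:ℝ) 1,
      ∀ yb : ℝ, yb = ya →
      ∀ w ∈ Set.Icc (0:ℝ) 1, ∀ z ∈ Set.Icc (0:ℝ) 1,
        K₉ * (Ac ^ ((3:ℝ)/2) / d ^ 2) * |xb - xa| * |z - ya| ≤
          |deriv (fun t => gab Ac d xa xb ya yb w t) z| := by
  refine ⟨1 / 64, by norm_num, ?_⟩
  rintro Ac d hAc hsd - xa hxa xb hxb _ hy y rfl w hw z hz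
  have hd : 0 < d := (sqrt_pos.mpr (by linarith)).trans_le hsd
  have ha := mem_Icc_add_sqrt_mul hsd hxa hw
  have hb := mem_Icc_add_sqrt_mul hsd hxb hw
  have hu : Ac * (y - z) ^ 2 ≤ d ^ 2 := by
    have hyz : (y - z) ^ 2 ≤ 1 := by nlinarith [hy.1, hy.2, hz.1, hz.2]
    have hAd : Ac ≤ d ^ 2 := (sqrt_le_left hd.le).mp hsd
    nlinarith
  rw [deriv_gab_of_eq (by linarith) (by linarith [ha.1]) (by linarith [hb.1]), abs_mul, abs_mul]
  calc 1 / 64 * (Ac ^ ((3 : ℝ) / 2) / d ^ 2) * |xb - xa| * |z - y|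
      = |Ac| * |z - y| * (|d + √Ac * (xb + w) - (d + √Ac * (xa + w))| / (64 * d ^ 2)) := by
        rw [rpow_three_halves (by linarith), show d + √Ac * (xb + w) - (d + √Ac * (xa + w)) =
          √Ac * (xb - xa) by ring, abs_mul, abs_of_nonneg (sqrt_nonneg Ac),
          abs_of_nonneg (by linarith : (0 : ℝ) ≤ Ac)]
        ring
    _ ≤ _ := by gcongr; exact div_le_abs_one_div_sqrt_sub hd ha hb (by positivity) hu
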